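/- arXiv:2410.08763 — 3 statements merged into one kernel-verified Lean document; each statement's English description precedes it below -/
import Mathlib

section
/- Along the curve V = U(U-1) the vector field (V, -2V + kUV - U(1-U)) satisfies, for 0 < U < 1, the inequality (-(2U-1), 1)·(U', V') = U²(U-1)(k-2) > 0 when k < 2, and this inner product is identically zero when k = 2 (so the curve is invariant). -/
/-- On the curve `V = U(U-1)`, the inner product of the inward normal
`(-(2U-1), 1)` with the vector field `(V, -2V + kUV - U(1-U))` equals
`U²(U-1)(k-2)`; it is positive for `0 < U < 1` when `k < 2`, and vanishes
identically when `k = 2`. -/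
theorem stmt_3 (k : ℝ) :
    ∀ U : ℝ, 0 < U → U < 1 →
      (-(2 * U - 1)) * (U * (U - 1)) +
        1 * (-2 * (U * (U - 1)) + k * U * (U * (U - 1)) - U * (1 - U)) =
        U ^ 2 * (U - 1) * (k - 2) ∧
      (k < 2 →
        0 < (-(2 * U - 1)) * (U * (U - 1)) +
          1 * (-2 * (U * (U - 1)) + k * U * (U * (U - 1)) - U * (1 - U))) ∧
      (k = 2 →
        (-(2 * U - 1)) * (U * (U - 1)) +
          1 * (-2 * (U * (U - 1)) + k * U * (U * (U - 1)) - U * (1 - U)) = 0) := by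
  intro U hU hU1
  have h : (-(2 * U - 1)) * (U * (U - 1)) +
      1 * (-2 * (U * (U - 1)) + k * U * (U * (U - 1)) - U * (1 - U)) =
      U ^ 2 * (U - 1) * (k - 2) := by ring
  refine ⟨h, ?_, ?_⟩
  · intro hk
    rw [h]
    have := mul_pos (mul_pos (pow_pos hU 2) (by linarith : (0:ℝ) < 1 - U))
      (by linarith : (0:ℝ) < 2 - k)
    nlinarith
  · intro hk; rw [h, hk]; ring
end

section
/- The function v₁(ε₁) = -(1 + W₀(e/ε₁))/W₀(e/ε₁), where W₀ is the principal branch of the Lambert W function, solves the ODE dv₁/dε₁ = (v₁+1)²/(ε₁ v₁) for ε₁ > 0 with the initial condition v₁(1) = -2, and satisfies v₁(ε₁) → -1 as ε₁ → 0⁺. -/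
/-!
On `(0, ∞)` the function `W₀` is the inverse of `x ↦ x e^x`, so by the inverse function theorem
`W₀' = W₀ / (z (1 + W₀))`. Writing `w = W₀(c/ε)`, the profile is `v = -1 - 1/w`, whose derivative
`-1 / (ε w (1 + w))` equals `(v + 1)² / (ε v)` for every `c > 0`; `c = e` is what makes `v(1) = -2`,
because `W₀(e) = 1`. As `ε → 0⁺`, `c/ε → ∞`, hence `w → ∞` and `v → -1`.
-/

open Filter Topology Set Real

lemma strictMonoOn_mul_exp : StrictMonoOn (fun x : ℝ => x * exp x) (Ici 0) :=
  fun _ ha _ _ hab => mul_lt_mul'' hab (exp_lt_exp.2 hab) ha (exp_pos _).le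

/-- On `(0, ∞)` the branch condition `W ≥ -1` is automatic: `W z e^{W z} = z > 0` forces `W z > 0`. -/
def IsLambertWOnPos (W : ℝ → ℝ) : Prop :=
  ∀ z : ℝ, 0 < z → W z * exp (W z) = z

namespace IsLambertWOnPos

variable {W : ℝ → ℝ} (hW : IsLambertWOnPos W)
include hW

lemma pos {z : ℝ} (hz : 0 < z) : 0 < W z :=
  pos_of_mul_pos_left ((hW z hz).symm ▸ hz) (exp_pos _).le

lemma apply_mul_exp {x : ℝ} (hx : 0 < x) : W (x * exp x) = x := by
  have hz : 0 < x * exp x := by positivity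
  exact strictMonoOn_mul_exp.injOn (hW.pos hz).le hx.le (hW _ hz)

lemma strictMonoOn : StrictMonoOn W (Ioi 0) := by
  intro a ha b hb hab
  by_contra! h
  have := strictMonoOn_mul_exp.monotoneOn (hW.pos hb).le (hW.pos ha).le h
  simp only [hW a ha, hW b hb] at this
  linarith

lemma tendsto_atTop : Tendsto W atTop atTop := by
  refine tendsto_atTop_atTop.2 fun b => ⟨max b 1 * exp (max b 1), fun a ha => ?_⟩
  have hm : 0 < max b 1 := lt_max_of_lt_right one_pos
  have hz : 0 < max b 1 * exp (max b 1) := by positivity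
  calc b ≤ max b 1 := le_max_left _ _
    _ = W (max b 1 * exp (max b 1)) := (hW.apply_mul_exp hm).symm
    _ ≤ W a := hW.strictMonoOn.monotoneOn hz (hz.trans_le ha) ha

lemma continuousAt {z : ℝ} (hz : 0 < z) : ContinuousAt W z := by
  refine hW.strictMonoOn.continuousAt_of_image_mem_nhds (Ioi_mem_nhds hz) ?_
  refine mem_of_superset (Ioi_mem_nhds (hW.pos hz)) fun t (ht : 0 < t) => ?_
  exact ⟨t * exp t, mul_pos ht (exp_pos t), hW.apply_mul_exp ht⟩

lemma hasDerivAt {z : ℝ} (hz : 0 < z) : HasDerivAt W (W z / (z * (1 + W z))) z := by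
  have hw := hW.pos hz
  have hf : HasDerivAt (fun x => x * exp x) ((1 + W z) * exp (W z)) (W z) := by
    exact ((hasDerivAt_id' _).fun_mul (hasDerivAt_exp _)).congr_deriv (by ring)
  have hinv := HasDerivAt.of_local_left_inverse (hW.continuousAt hz) hf (by positivity)
    (eventually_of_mem (Ioi_mem_nhds hz) hW)
  refine hinv.congr_deriv ?_
  have hzw := hW z hz
  generalize W z = w at hw hzw ⊢
  subst hzw
  field_simp

end IsLambertWOnPos

noncomputable def lambertProfile (W : ℝ → ℝ) (c ε : ℝ) : ℝ :=
  -(1 + W (c / ε)) / W (c / ε)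

section lambertProfile

variable {W : ℝ → ℝ} (hW : IsLambertWOnPos W) {c : ℝ} (hc : 0 < c)
include hW hc

lemma lambertProfile_eq {ε : ℝ} (hε : 0 < ε) :
    lambertProfile W c ε = -1 - (W (c / ε))⁻¹ := by
  have := hW.pos (div_pos hc hε)
  unfold lambertProfile
  field_simp
  ring

lemma hasDerivAt_apply_const_div {ε : ℝ} (hε : 0 < ε) :
    HasDerivAt (fun ε => W (c / ε)) (-W (c / ε) / (ε * (1 + W (c / ε)))) ε := by
  have hz : 0 < c / ε := div_pos hc hε
  have := hW.pos hz
  refine ((hW.hasDerivAt hz).comp ε ((hasDerivAt_inv hε.ne').const_mul c)).congr_deriv ?_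
  field_simp

lemma hasDerivAt_lambertProfile {ε : ℝ} (hε : 0 < ε) :
    HasDerivAt (lambertProfile W c)
      ((lambertProfile W c ε + 1) ^ 2 / (ε * lambertProfile W c ε)) ε := by
  have hg := hasDerivAt_apply_const_div hW hc hε
  have hw := hW.pos (div_pos hc hε)
  refine ((hg.const_add 1).fun_neg.fun_div hg hw.ne').congr_deriv ?_
  unfold lambertProfile
  field_simp
  ring

lemma tendsto_lambertProfile : Tendsto (lambertProfile W c) (𝓝[>] 0) (𝓝 (-1)) := by
  have hz : Tendsto (fun ε => c / ε) (𝓝[>] 0) atTop := by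
    simpa only [div_eq_mul_inv] using tendsto_inv_nhdsGT_zero.const_mul_atTop hc
  have hlim := ((tendsto_inv_atTop_zero.comp (hW.tendsto_atTop.comp hz)).const_sub (-1 : ℝ))
  rw [sub_zero] at hlim
  refine hlim.congr' (eventually_nhdsWithin_of_forall fun ε hε => ?_)
  exact (lambertProfile_eq hW hc hε).symm

end lambertProfile

/-- For any function `W₀` satisfying the defining property of the principal
branch of the Lambert W function (`W₀(z) e^{W₀(z)} = z` and `W₀(z) ≥ -1` for
`z ≥ -1/e`), the function `v₁(ε₁) = -(1 + W₀(e/ε₁))/W₀(e/ε₁)` solves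
`dv₁/dε₁ = (v₁+1)²/(ε₁ v₁)` on `(0,∞)`, satisfies `v₁(1) = -2`, and tends to
`-1` as `ε₁ → 0⁺`. -/
theorem stmt_6 (W₀ : ℝ → ℝ)
    (hW : ∀ z : ℝ, -Real.exp (-1) ≤ z →
      W₀ z * Real.exp (W₀ z) = z ∧ -1 ≤ W₀ z)
    (v₁ : ℝ → ℝ)
    (hv₁ : ∀ ε₁ : ℝ, 0 < ε₁ →
      v₁ ε₁ = -(1 + W₀ (Real.exp 1 / ε₁)) / W₀ (Real.exp 1 / ε₁)) :
    v₁ 1 = -2 ∧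
    (∀ ε₁ : ℝ, 0 < ε₁ →
      HasDerivAt v₁ ((v₁ ε₁ + 1) ^ 2 / (ε₁ * v₁ ε₁)) ε₁) ∧
    Tendsto v₁ (𝓝[>] 0) (𝓝 (-1)) := by
  have hW' : IsLambertWOnPos W₀ := fun z hz =>
    (hW z ((neg_nonpos.2 (exp_pos _).le).trans hz.le)).1
  have he : (0 : ℝ) < exp 1 := exp_pos 1
  have hv : v₁ =ᶠ[𝓝[>] 0] lambertProfile W₀ (exp 1) := eventually_nhdsWithin_of_forall hv₁
  refine ⟨?_, fun ε hε => ?_, (tendsto_lambertProfile hW' he).congr' hv.symm⟩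
  · rw [hv₁ 1 one_pos, div_one, ← one_mul (exp 1), hW'.apply_mul_exp one_pos]
    norm_num
  · have hloc : v₁ =ᶠ[𝓝 ε] lambertProfile W₀ (exp 1) :=
      eventually_of_mem (Ioi_mem_nhds hε) hv₁
    rw [hloc.eq_of_nhds]
    exact (hasDerivAt_lambertProfile hW' he hε).congr_of_eventuallyEq hloc
end

section
/- The unique solution of the linear ODE φ'(U) = -1 + (4/k²)·φ(U)/(U(1-U)) on (0,1) that remains bounded as U → 1⁻, in the case k = 2, is φ(U) = U(1 - U + ln U)/(U - 1). -/
open Filter Topology Set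

/-!
The integrating factor `(1 - U)/U` of the homogeneous equation `ψ' = ψ/(U(1-U))` turns the
equation into `(φ (1 - U)/U)' = -(1 - U)/U = -(1 - U + ln U)'`, so `φ (1 - U)/U + 1 - U + ln U`
is constant on `(0,1)`. Boundedness of `φ` as `U → 1⁻` forces this constant to be its limit `0`,
and solving for `φ` gives the formula.
-/

noncomputable def firstIntegral (φ : ℝ → ℝ) (U : ℝ) : ℝ :=
  φ U * ((1 - U) / U) + (1 - U + Real.log U)

lemma hasDerivAt_firstIntegral {φ : ℝ → ℝ} {U : ℝ} (hU : U ∈ Ioo (0 : ℝ) 1)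
    (hφ : HasDerivAt φ (-1 + φ U / (U * (1 - U))) U) :
    HasDerivAt (firstIntegral φ) 0 U := by
  have hU₀ : U ≠ 0 := hU.1.ne'
  have hU₁ : 1 - U ≠ 0 := (sub_pos.2 hU.2).ne'
  have hfactor : HasDerivAt (fun x ↦ (1 - x) / x) ((-1 * U - (1 - U) * 1) / U ^ 2) U :=
    ((hasDerivAt_id U).const_sub 1).div (hasDerivAt_id U) hU₀
  have hlog : HasDerivAt (fun x ↦ 1 - x + Real.log x) (-1 + U⁻¹) U :=
    ((hasDerivAt_id U).const_sub 1).add (Real.hasDerivAt_log hU₀)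
  refine ((hφ.mul hfactor).add hlog).congr_deriv ?_
  field_simp
  ring

lemma exists_firstIntegral_eq_const {φ : ℝ → ℝ}
    (hode : ∀ U ∈ Ioo (0 : ℝ) 1, HasDerivAt φ (-1 + φ U / (U * (1 - U))) U) :
    ∃ c, ∀ U ∈ Ioo (0 : ℝ) 1, firstIntegral φ U = c :=
  isOpen_Ioo.exists_is_const_of_deriv_eq_zero isPreconnected_Ioo
    (fun U hU ↦ (hasDerivAt_firstIntegral hU (hode U hU)).differentiableAt.differentiableWithinAt)
    (fun U hU ↦ (hasDerivAt_firstIntegral hU (hode U hU)).deriv)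

lemma tendsto_firstIntegral_nhdsLT_one {φ : ℝ → ℝ}
    (hbdd : ∃ C : ℝ, ∀ᶠ U in 𝓝[<] (1 : ℝ), |φ U| ≤ C) :
    Tendsto (firstIntegral φ) (𝓝[<] 1) (𝓝 0) := by
  obtain ⟨C, hC⟩ := hbdd
  have hφ : IsBoundedUnder (· ≤ ·) (𝓝[<] (1 : ℝ)) (norm ∘ φ) := ⟨C, hC⟩
  have hfactor : Tendsto (fun U : ℝ ↦ (1 - U) / U) (𝓝[<] 1) (𝓝 0) := by
    have : ContinuousAt (fun U : ℝ ↦ (1 - U) / U) 1 := by fun_prop (disch := norm_num)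
    simpa using this.tendsto.mono_left nhdsWithin_le_nhds
  have hlog : Tendsto (fun U : ℝ ↦ 1 - U + Real.log U) (𝓝[<] 1) (𝓝 0) := by
    have : ContinuousAt (fun U : ℝ ↦ 1 - U + Real.log U) 1 := by fun_prop (disch := norm_num)
    simpa using this.tendsto.mono_left nhdsWithin_le_nhds
  show Tendsto (fun U ↦ φ U * ((1 - U) / U) + (1 - U + Real.log U)) _ _
  simpa using (isBoundedUnder_le_mul_tendsto_zero hφ hfactor).add hlog

lemma eq_of_firstIntegral_eq_zero {φ : ℝ → ℝ} {U : ℝ} (hU : U ∈ Ioo (0 : ℝ) 1)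
    (h : firstIntegral φ U = 0) :
    φ U = U * (1 - U + Real.log U) / (U - 1) := by
  have hU₀ : U ≠ 0 := hU.1.ne'
  have hU₁ : U - 1 ≠ 0 := (sub_neg.2 hU.2).ne
  rw [firstIntegral] at h
  field_simp at h
  rw [eq_div_iff hU₁]
  linear_combination -h

/-- For `k = 2` (so `4/k² = 1`), any solution `φ` of
`φ' = -1 + φ/(U(1-U))` on `(0,1)` that remains bounded as `U → 1⁻`
equals `U(1 - U + ln U)/(U - 1)` on `(0,1)`. -/
theorem stmt_10 (φ : ℝ → ℝ)
    (hode : ∀ U ∈ Set.Ioo (0 : ℝ) 1,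
      HasDerivAt φ (-1 + φ U / (U * (1 - U))) U)
    (hbdd : ∃ C : ℝ, ∀ᶠ U in 𝓝[<] (1 : ℝ), |φ U| ≤ C) :
    ∀ U ∈ Set.Ioo (0 : ℝ) 1,
      φ U = U * (1 - U + Real.log U) / (U - 1) := by
  obtain ⟨c, hc⟩ := exists_firstIntegral_eq_const hode
  have hc₀ : c = 0 := by
    refine tendsto_nhds_unique ?_ (tendsto_firstIntegral_nhdsLT_one hbdd)
    refine tendsto_const_nhds.congr' ?_
    filter_upwards [Ioo_mem_nhdsLT one_pos] with U hU using (hc U hU).symm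
  intro U hU
  exact eq_of_firstIntegral_eq_zero hU (hc₀ ▸ hc U hU)
end
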